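/- arXiv:2308.01325 — 3 statements merged into one kernel-verified Lean document; each statement's English description precedes it below -/
import Mathlib

section
/- Let G be a torsion-free abelian group, and let q ≥ r > s ≥ 1 be integers. Suppose (α_1,...,α_q) is a q-tuple of elements of G with the property (P_{r,s}): for any r chosen elements α_{l(1)},...,α_{l(r)} (with 1 ≤ l(1) < ... < l(r) ≤ q) and any s distinct indices i_1,...,i_s ∈ {1,...,r}, there exist distinct indices j_1,...,j_s ∈ {1,...,r} with {j_1,...,j_s} ≠ {i_1,...,i_s} such that α_{l(i_1)}·...·α_{l(i_s)} = α_{l(j_1)}·...·α_{l(j_s)}. Then there exist q−r+2 distinct indices i_1,...,i_{q−r+2} ∈ {1,...,q} with α_{i_1} = α_{i_2} = ... = α_{i_{q−r+2}}. -/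
/-- Fujimoto's property `(P_{r,s})` for a `q`-tuple `α` of elements of an abelian group:
for any choice of `r` of the elements (given by an embedding `l : Fin r ↪ Fin q`) and any
set `I` of `s` distinct indices among `{1,...,r}`, there is a different set `J` of `s`
distinct indices with the same product. -/
def HasPropP {G : Type*} [CommGroup G] {q : ℕ} (α : Fin q → G) (r s : ℕ) : Prop :=
  ∀ l : Fin r ↪ Fin q, ∀ I : Finset (Fin r), I.card = s →
    ∃ J : Finset (Fin r), J.card = s ∧ J ≠ I ∧ ∏ x ∈ I, α (l x) = ∏ x ∈ J, α (l x)

/-- The December 2024 Mathlib definition: no non-identity element has finite order. -/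
def Monoid.IsTorsionFree (G : Type*) [Monoid G] : Prop :=
  ∀ g : G, g ≠ 1 → ¬IsOfFinOrder g

/-!
Embed the finitely generated subgroup spanned by the `α i` into `ℤⁿ` with the lexicographic
order; property `(P_{r,s})` survives, so we may assume `G` is linearly ordered and `α` sorted.
Select the first `r - s` and the last `s` entries and let `I` be the last `s` of them. A set
`J ≠ I` of the same size with the same product trades elements `≥ α (q - s)` for elements
`≤ α (q - s)`, so every entry of `J \ I` equals `α (q - s)`. Some such entry sits at a position
`< r - s`, hence the sorted tuple is constant on the `q - r + 2` positions `r - s - 1, …, q - s`.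
-/

theorem Finset.exists_mem_sdiff_apply_eq {ι M : Type*} [DecidableEq ι] [CancelCommMonoid M]
    [LinearOrder M] [IsOrderedCancelMonoid M] {I J : Finset ι} {f : ι → M} {v : M}
    (hcard : J.card = I.card) (hne : J ≠ I) (hprod : ∏ x ∈ I, f x = ∏ x ∈ J, f x)
    (hI : ∀ x ∈ I, v ≤ f x) (hIc : ∀ x ∉ I, f x ≤ v) :
    ∃ x ∈ J, x ∉ I ∧ f x = v := by
  obtain ⟨x, hx⟩ : (J \ I).Nonempty :=
    sdiff_nonempty.2 fun h => hne (eq_of_subset_of_card_le h hcard.ge)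
  have hsd : ∏ x ∈ I \ J, f x = ∏ x ∈ J \ I, f x := prod_sdiff_eq_prod_sdiff_iff.2 hprod
  have hle : ∀ x ∈ J \ I, f x ≤ v := fun x hx => hIc x (mem_sdiff.1 hx).2
  have heq : ∏ x ∈ J \ I, f x = ∏ _x ∈ J \ I, v := by
    rw [prod_const]
    refine le_antisymm (prod_le_pow_card _ _ _ hle) ?_
    rw [← card_sdiff_comm hcard.symm, ← hsd]
    exact pow_card_le_prod _ _ _ fun x hx => hI x (mem_sdiff.1 hx).1
  exact ⟨x, (mem_sdiff.1 hx).1, (mem_sdiff.1 hx).2, (prod_eq_prod_iff_of_le hle).1 heq x hx⟩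

theorem exists_injective_monoidHom_lex_of_fg (H : Type*) [CommGroup H] [Group.FG H]
    [IsMulTorsionFree H] :
    ∃ (n : ℕ) (f : H →* Multiplicative (Lex (Fin n →₀ ℤ))), Function.Injective f := by
  have : Module.Free ℤ (Additive H) := Module.free_of_finite_type_torsion_free'
  let e := (Module.finBasis ℤ (Additive H)).repr.toAddEquiv.trans (toLexAddEquiv _)
  exact ⟨_, AddMonoidHom.toMultiplicativeRight e.toAddMonoidHom, e.injective⟩

section

variable {G H : Type*} [CommGroup G] [CommGroup H] {q r s : ℕ} {α : Fin q → G}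

theorem HasPropP.comp_embedding {p : ℕ} (hα : HasPropP α r s) (e : Fin p ↪ Fin q) :
    HasPropP (α ∘ e) r s :=
  fun l => hα (l.trans e)

theorem hasPropP_comp_iff {f : G →* H} (hf : Function.Injective f) :
    HasPropP (f ∘ α) r s ↔ HasPropP α r s := by
  refine forall₂_congr fun l I => imp_congr_right fun _ => exists_congr fun J => ?_
  simp only [Function.comp_apply, ← map_prod, hf.eq_iff]

end

section LinearOrder

variable {M : Type*} [CommGroup M] [LinearOrder M] [IsOrderedMonoid M]
  {q r s : ℕ}

theorem HasPropP.apply_eq_of_monotone {a : Fin q → M} (hmono : Monotone a)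
    (ha : HasPropP a r s) (hs : 1 ≤ s) (hsr : s < r) (hrq : r ≤ q) :
    a ⟨r - s - 1, by omega⟩ = a ⟨q - s, by omega⟩ := by
  let l : Fin r ↪ Fin q :=
    ⟨fun t => ⟨if t < r - s then t else t + (q - r), by split <;> omega⟩, fun t u h => by
      simp only [Fin.mk.injEq] at h
      ext
      split_ifs at h <;> omega⟩
  have hl (t : Fin r) : (l t : ℕ) = if (t : ℕ) < r - s then (t : ℕ) else t + (q - r) := rfl
  let I : Finset (Fin r) := Finset.Ici ⟨r - s, by omega⟩
  have hI : I.card = s := by simp only [I, Fin.card_Ici]; omega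
  have hmem (t : Fin r) : t ∈ I ↔ r - s ≤ t := by simp only [I, Finset.mem_Ici, Fin.le_def]
  obtain ⟨J, hJ, hJI, hprod⟩ := ha l I hI
  obtain ⟨x, -, hxI, hx⟩ := Finset.exists_mem_sdiff_apply_eq (hJ.trans hI.symm) hJI hprod
    (v := a ⟨q - s, by omega⟩)
    (fun t ht => hmono <| by rw [hmem] at ht; simp only [Fin.le_def, hl]; split_ifs <;> omega)
    (fun t ht => hmono <| by rw [hmem] at ht; simp only [Fin.le_def, hl]; split_ifs <;> omega)
  have hx' : x < r - s := by rw [hmem] at hxI; omega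
  refine le_antisymm (hmono (by rw [Fin.mk_le_mk]; omega)) ?_
  rw [← hx]
  exact hmono (by simp only [Fin.le_def, hl, if_pos hx']; omega)

theorem HasPropP.exists_finset_card_eq_forall_eq {α : Fin q → M} (hα : HasPropP α r s)
    (hs : 1 ≤ s) (hsr : s < r) (hrq : r ≤ q) :
    ∃ T : Finset (Fin q), T.card = q - r + 2 ∧ ∀ i ∈ T, ∀ j ∈ T, α i = α j := by
  let σ := Tuple.sort α
  have hmono : Monotone (α ∘ σ) := Tuple.monotone_sort α
  have hend := (hα.comp_embedding σ.toEmbedding).apply_eq_of_monotone hmono hs hsr hrq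
  let K := Finset.Icc (⟨r - s - 1, by omega⟩ : Fin q) ⟨q - s, by omega⟩
  have hconst : ∀ j ∈ K, α (σ j) = α (σ ⟨q - s, by omega⟩) := fun j hj =>
    le_antisymm (hmono (Finset.mem_Icc.1 hj).2)
      (hend.symm.trans_le (hmono (Finset.mem_Icc.1 hj).1))
  refine ⟨K.map σ.toEmbedding, by simp only [K, Finset.card_map, Fin.card_Icc]; omega, ?_⟩
  simp only [Finset.mem_map]
  rintro _ ⟨i, hi, rfl⟩ _ ⟨j, hj, rfl⟩
  exact (hconst i hi).trans (hconst j hj).symm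

end LinearOrder

/-- **Fujimoto's first combinatorial lemma.** If a `q`-tuple in a torsion-free abelian
group has property `(P_{r,s})` with `q ≥ r > s ≥ 1`, then some `q - r + 2` of its entries
are equal. -/
theorem fujimoto_first_combinatorial_lemma (G : Type*) [CommGroup G]
    (hG : Monoid.IsTorsionFree G) (q r s : ℕ) (hs : 1 ≤ s) (hsr : s < r) (hrq : r ≤ q)
    (α : Fin q → G) (hα : HasPropP α r s) :
    ∃ T : Finset (Fin q), T.card = q - r + 2 ∧ ∀ i ∈ T, ∀ j ∈ T, α i = α j := by
  have : IsMulTorsionFree G := isMulTorsionFree_iff_not_isOfFinOrder.2 fun g => hG g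
  let H := Subgroup.closure (Set.range α)
  let β : Fin q → H := fun i => ⟨α i, Subgroup.subset_closure (Set.mem_range_self i)⟩
  obtain ⟨n, f, hf⟩ := exists_injective_monoidHom_lex_of_fg H
  have hβ : HasPropP (f ∘ β) r s :=
    (hasPropP_comp_iff hf).2 <| (hasPropP_comp_iff (f := H.subtype) Subtype.val_injective).1 hα
  obtain ⟨T, hT, hTeq⟩ := hβ.exists_finset_card_eq_forall_eq hs hsr hrq
  exact ⟨T, hT, fun i hi j hj => congrArg Subtype.val (hf (hTeq i hi j hj))⟩
end

section
/- Let f and g be meromorphic maps of C^m into P^n with reduced representations (f_0,...,f_n) and (g_0,...,g_n). Suppose g(C^m) is not contained in any hypersurface of degree ≤ n+1, that H_{n+2},...,H_{2n+2} are the coordinate hyperplanes {x_{i-n-2} = 0} (for i = n+2,...,2n+2), H_1,...,H_{n+1} are hyperplanes defined by linear forms a^i_0 X_0 + ... + a^i_n X_n making {H_j}_{j=1}^{2n+2} in general position, and that (f,H_i)/(g,H_i) = c_{i-1}·(f_{i-1}/g_{i-1}) holds for all 1 ≤ i ≤ n+1, where (f,H_i) = a^i_0 f_0 + ... + a^i_n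 f_n, (g,H_i) = a^i_0 g_0 + ... + a^i_n g_n, and c_0,...,c_n are nonzero constants. Then c_0 = c_1 = ... = c_n = 1 and f = g. -/
/-!
Write `h_i = c_i u_i`, so that `F = u ⊙ G` coordinatewise. The hypotheses `(f,H_i) = h_i (g,H_i)`
then say that `u(z)` lies in the kernel of `K(G(z))`, where `K(x) = A·diag(x) - diag(c_i ℓ_i(x))`
(`relationMatrix A c`) is a square matrix of linear forms, `A = (a_ij)`, `ℓ_i(x) = ∑_j a_ij x_j`.
Its determinant is a form of degree `n+1`; were it nonzero, it would not vanish identically along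
`G`, and the identity theorem would force the nowhere-vanishing `u` to vanish. Hence `det K = 0`,
and evaluating at the coordinate vector `e_k` gives `c_k = 1`, because general position makes
every `a_ik` nonzero. Once `c = 1`, constant vectors also lie in the kernel of `K(x)`, while the
principal minor of `K` omitting the index `k` is a nonzero form of degree `n` (it is diagonal at
`e_k`). The same argument applied to `u - u_k` shows that `u` is constant in its index, i.e. `F`
is a multiple of `G`.
-/

open MvPolynomial Matrix Topology

section Analytic

variable {E : Type*} [NormedAddCommGroup E] [NormedSpace ℂ E]

theorem Differentiable.eq_zero_of_mul_eq_zero {f g : E → ℂ} (hf : Differentiable ℂ f)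
    (hg : Differentiable ℂ g) (hfg : ∀ z, f z * g z = 0) {z₀ : E} (hz₀ : g z₀ ≠ 0) (z : E) :
    f z = 0 := by
  -- restrict to the complex line through `z₀` and `z`, where the one-variable theory applies
  set γ : ℂ → E := fun t => z₀ + t • (z - z₀)
  have hγ : Differentiable ℂ γ := (differentiable_id.smul_const _).const_add _
  have hg_ne : ∀ᶠ t in 𝓝 (0 : ℂ), g (γ t) ≠ 0 :=
    (hg.comp hγ).continuous.continuousAt.eventually_ne (by simpa [γ] using hz₀)
  have hf_zero : f ∘ γ =ᶠ[𝓝 0] 0 := by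
    filter_upwards [hg_ne] with t ht using (mul_eq_zero.1 (hfg (γ t))).resolve_right ht
  have hfγ := Complex.analyticOnNhd_univ_iff_differentiable.2 (hf.comp hγ)
  simpa [γ] using hfγ.eqOn_zero_of_preconnected_of_eventuallyEq_zero isPreconnected_univ
    (Set.mem_univ 0) hf_zero (Set.mem_univ (1 : ℂ))

theorem differentiable_mvPolynomial_eval {σ : Type*} [Fintype σ] {G : E → σ → ℂ}
    (hG : ∀ s, Differentiable ℂ fun z => G z s) (p : MvPolynomial σ ℂ) :
    Differentiable ℂ fun z => eval (G z) p := fun z =>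
  ((AnalyticOnNhd.eval_mvPolynomial p (G z) trivial).differentiableAt).comp z
    (differentiable_pi.2 hG z)

end Analytic

theorem MvPolynomial.IsHomogeneous.det {σ R ι : Type*} [CommRing R] [Fintype ι] [DecidableEq ι]
    {M : Matrix ι ι (MvPolynomial σ R)} {d : ℕ} (hM : ∀ i j, (M i j).IsHomogeneous d) :
    M.det.IsHomogeneous (Fintype.card ι * d) := by
  rw [det_apply']
  refine IsHomogeneous.sum _ _ _ fun τ _ => ?_
  rw [← map_intCast (C : R →+* MvPolynomial σ R), ← zero_add (Fintype.card ι * d)]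
  refine (isHomogeneous_C _ _).mul ?_
  convert IsHomogeneous.prod _ _ (fun _ => d) fun i _ => hM (τ i) i using 1
  simp [mul_comm]

section RelationMatrix

variable {R ι : Type*} [CommRing R] [Fintype ι] [DecidableEq ι]

noncomputable def relationMatrix (A : Matrix ι ι R) (c : ι → R) : Matrix ι ι (MvPolynomial ι R) :=
  A.map C * diagonal X - diagonal fun i => C (c i) * (A.map C *ᵥ X) i

theorem isHomogeneous_relationMatrix (A : Matrix ι ι R) (c : ι → R) (i j : ι) :
    (relationMatrix A c i j).IsHomogeneous 1 := by
  have hℓ : (A.map C *ᵥ X) i = ∑ t, C (A i t) * X t := rfl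
  rw [relationMatrix, Matrix.sub_apply, mul_diagonal, map_apply, diagonal_apply, hℓ]
  refine (isHomogeneous_C_mul_X _ _).sub ?_
  split_ifs
  · exact (IsHomogeneous.sum _ _ _ fun t _ => isHomogeneous_C_mul_X _ _).C_mul _
  · exact isHomogeneous_zero _ _ _

theorem relationMatrix_map_eval (A : Matrix ι ι R) (c x : ι → R) :
    (relationMatrix A c).map (eval x) = A * diagonal x - diagonal (c * (A *ᵥ x)) := by
  ext i j
  rcases eq_or_ne i j with rfl | hij
  · simp [relationMatrix, RingHom.map_mulVec, Function.comp_def]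
  · simp [relationMatrix, hij]

theorem relationMatrix_map_eval_mulVec (A : Matrix ι ι R) (c x v : ι → R) :
    (relationMatrix A c).map (eval x) *ᵥ v = A *ᵥ (x * v) - c * (A *ᵥ x) * v := by
  have hdiag : ∀ w, diagonal w *ᵥ v = w * v := fun w => funext (mulVec_diagonal w v)
  rw [relationMatrix_map_eval, sub_mulVec, ← mulVec_mulVec, hdiag, hdiag]

theorem relationMatrix_one_map_eval_mulVec_const (A : Matrix ι ι R) (x : ι → R) (r : R) :
    (relationMatrix A 1).map (eval x) *ᵥ (fun _ => r) = 0 := by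
  rw [relationMatrix_map_eval_mulVec]
  ext i
  simp only [mulVec, dotProduct, Pi.sub_apply, Pi.mul_apply, Pi.zero_apply,
    one_mul, Finset.sum_mul, mul_assoc, sub_self]

end RelationMatrix

section Field

variable {K ι : Type*} [Field K] [Fintype ι] [DecidableEq ι]

theorem det_relationMatrix_ne_zero {A : Matrix ι ι K} {c : ι → K} {k : ι}
    (hA : ∀ i, A i k ≠ 0) (hc : ∀ i, c i ≠ 0) (hck : c k ≠ 1) : (relationMatrix A c).det ≠ 0 := by
  intro hdet
  obtain ⟨v, hv0, hv⟩ := exists_mulVec_eq_zero_iff.2 <| show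
      ((relationMatrix A c).map (eval (Pi.single k 1))).det = 0 by
    rw [← RingHom.mapMatrix_apply, ← RingHom.map_det, hdet, map_zero]
  rw [relationMatrix_map_eval_mulVec] at hv
  have hrow : ∀ i, v k = c i * v i := by
    intro i
    have hi : A i k * v k - c i * A i k * v i = 0 := by
      simpa [mulVec, dotProduct, Pi.single_apply] using congrFun hv i
    exact mul_left_cancel₀ (hA i) (by linear_combination hi)
  have hvk : v k = 0 := by
    have h : (1 - c k) * v k = 0 := by linear_combination hrow k
    exact (mul_eq_zero.1 h).resolve_left (sub_ne_zero.2 (Ne.symm hck))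
  exact hv0 (funext fun i => by simpa [hvk, hc i] using (hrow i).symm)

theorem det_submatrix_succAbove_relationMatrix_one_ne_zero {n : ℕ}
    {A : Matrix (Fin (n + 1)) (Fin (n + 1)) K} {k : Fin (n + 1)} (hA : ∀ i, A i k ≠ 0) :
    ((relationMatrix A 1).submatrix k.succAbove k.succAbove).det ≠ 0 := by
  intro hdet
  have hdiag : ((relationMatrix A 1).submatrix k.succAbove k.succAbove).map
      (eval (Pi.single k 1)) = diagonal fun i => -A (k.succAbove i) k := by
    rw [← submatrix_map, relationMatrix_map_eval]
    ext i j
    rcases eq_or_ne i j with rfl | hij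
    · simp
    · simp [hij]
  have := congrArg (eval (Pi.single k 1)) hdet
  rw [RingHom.map_det, map_zero, RingHom.mapMatrix_apply, hdiag, det_diagonal] at this
  exact Finset.prod_ne_zero_iff.2 (fun i _ => neg_ne_zero.2 (hA _)) this

end Field

theorem Matrix.submatrix_succAbove_mulVec {R m l : Type*} [NonUnitalNonAssocSemiring R] {n : ℕ}
    (M : Matrix m (Fin (n + 1)) R) (f : l → m) (k : Fin (n + 1)) {w : Fin (n + 1) → R}
    (hw : w k = 0) : M.submatrix f k.succAbove *ᵥ (w ∘ k.succAbove) = (M *ᵥ w) ∘ f := by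
  ext i
  simp [mulVec, dotProduct, Fin.sum_univ_succAbove _ k, hw]

section Hypersurface

variable {E σ : Type*} [NormedAddCommGroup E] [NormedSpace ℂ E]

def LiesInNoHypersurface (G : E → σ → ℂ) (D : ℕ) : Prop :=
  ∀ (p : MvPolynomial σ ℂ) (d : ℕ), d ≤ D → p.IsHomogeneous d → (∀ z, eval (G z) p = 0) → p = 0

variable {ι : Type*} [Fintype ι] [DecidableEq ι] {D : ℕ}

theorem LiesInNoHypersurface.eq_zero_of_mulVec_eq_zero [Fintype σ] {G : E → σ → ℂ}
    (hGD : LiesInNoHypersurface G D) (hG : ∀ s, Differentiable ℂ fun z => G z s)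
    {P : Matrix ι ι (MvPolynomial σ ℂ)} (hP : ∀ i j, (P i j).IsHomogeneous 1)
    (hcard : Fintype.card ι ≤ D) (hdet : P.det ≠ 0)
    {v : E → ι → ℂ} (hv : ∀ j, Differentiable ℂ fun z => v z j)
    (hPv : ∀ z, P.map (eval (G z)) *ᵥ v z = 0) (z : E) : v z = 0 := by
  obtain ⟨z₀, hz₀⟩ : ∃ z₀, eval (G z₀) P.det ≠ 0 := by
    by_contra! h
    exact hdet (hGD _ _ (by simpa using hcard) (IsHomogeneous.det hP) h)
  funext j
  refine (hv j).eq_zero_of_mul_eq_zero (differentiable_mvPolynomial_eval hG P.det) (fun w => ?_)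
    hz₀ z
  by_cases hw : eval (G w) P.det = 0
  · rw [hw, mul_zero]
  · rw [RingHom.map_det] at hw
    rw [Matrix.eq_zero_of_mulVec_eq_zero hw (hPv w), Pi.zero_apply, zero_mul]

theorem LiesInNoHypersurface.eq_one_of_relationMatrix_mulVec_eq_zero {G : E → ι → ℂ}
    (hGD : LiesInNoHypersurface G D) (hG : ∀ s, Differentiable ℂ fun z => G z s)
    (hcard : Fintype.card ι ≤ D) {A : Matrix ι ι ℂ} {c : ι → ℂ} {k : ι} (hA : ∀ i, A i k ≠ 0)
    (hc : ∀ i, c i ≠ 0) {u : E → ι → ℂ} (hu : ∀ j, Differentiable ℂ fun z => u z j) {z₀ : E}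
    (hu₀ : u z₀ ≠ 0) (hKu : ∀ z, (relationMatrix A c).map (eval (G z)) *ᵥ u z = 0) :
    c k = 1 := by
  by_contra hck
  exact hu₀ (hGD.eq_zero_of_mulVec_eq_zero hG (isHomogeneous_relationMatrix A c) hcard
    (det_relationMatrix_ne_zero hA hc hck) hu hKu z₀)

theorem LiesInNoHypersurface.apply_eq_of_relationMatrix_one_mulVec_eq_zero {n : ℕ}
    {G : E → Fin (n + 1) → ℂ} (hGD : LiesInNoHypersurface G D)
    (hG : ∀ s, Differentiable ℂ fun z => G z s) (hn : n ≤ D)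
    {A : Matrix (Fin (n + 1)) (Fin (n + 1)) ℂ} {k : Fin (n + 1)} (hA : ∀ i, A i k ≠ 0)
    {u : E → Fin (n + 1) → ℂ} (hu : ∀ j, Differentiable ℂ fun z => u z j)
    (hKu : ∀ z, (relationMatrix A 1).map (eval (G z)) *ᵥ u z = 0) (z : E) (j : Fin (n + 1)) :
    u z j = u z k := by
  set P := (relationMatrix A 1).submatrix k.succAbove k.succAbove
  set w : E → Fin n → ℂ := fun z t => u z (k.succAbove t) - u z k
  have hPw : ∀ z, P.map (eval (G z)) *ᵥ w z = 0 := fun z => by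
    have := submatrix_succAbove_mulVec ((relationMatrix A 1).map (eval (G z))) k.succAbove k
      (w := u z - fun _ => u z k) (by simp)
    rwa [mulVec_sub, hKu, relationMatrix_one_map_eval_mulVec_const, sub_zero,
      submatrix_map] at this
  have hw := hGD.eq_zero_of_mulVec_eq_zero hG (fun i j => isHomogeneous_relationMatrix A 1 _ _)
    (by simpa using hn) (det_submatrix_succAbove_relationMatrix_one_ne_zero hA)
    (fun t => (hu _).sub (hu k)) hPw z
  rcases Fin.eq_self_or_eq_succAbove k j with rfl | ⟨t, rfl⟩
  · rfl
  · exact sub_eq_zero.1 (congrFun hw t)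

end Hypersurface

theorem apply_ne_zero_of_linearIndepOn_insert {K ι κ : Type*} [Field K] [Fintype κ]
    [DecidableEq κ] {L : ι → κ → K} {e : κ → ι} (he : ∀ j, L (e j) = Pi.single j 1) {i : ι}
    {k : κ} (hi : i ∉ e '' {k}ᶜ) (hL : LinearIndepOn K L (insert i (e '' {k}ᶜ))) :
    L i k ≠ 0 := by
  intro hik
  refine ((linearIndepOn_insert hi).1 hL).2 ?_
  rw [← Finset.univ_sum_single (L i)]
  refine Submodule.sum_mem _ fun j _ => ?_
  rcases eq_or_ne j k with rfl | hj
  · rw [hik, Pi.single_zero]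
    exact zero_mem _
  · have : Pi.single j (L i j) = L i j • L (e j) := by
      rw [he]
      ext t
      simp [Pi.single_apply]
    rw [this]
    exact Submodule.smul_mem _ _ (Submodule.subset_span ⟨e j, ⟨j, hj, rfl⟩, rfl⟩)

theorem coeff_ne_zero_of_generalPosition {K : Type*} [Field K] {n : ℕ}
    (a : Fin (n + 1) → Fin (n + 1) → K) (L : Fin (2 * n + 2) → Fin (n + 1) → K)
    (hL1 : ∀ (i : Fin (2 * n + 2)) (h : i.val < n + 1), L i = a ⟨i.val, h⟩)
    (hL2 : ∀ (i : Fin (2 * n + 2)), n + 1 ≤ i.val →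
      L i = fun j => if j.val = i.val - (n + 1) then 1 else 0)
    (hgp : ∀ T : Finset (Fin (2 * n + 2)), T.card = n + 1 →
      LinearIndependent K fun i : T => L i.val)
    (i k : Fin (n + 1)) : a i k ≠ 0 := by
  let e : Fin (n + 1) → Fin (2 * n + 2) := fun j => ⟨n + 1 + j, by omega⟩
  let i₀ : Fin (2 * n + 2) := ⟨i, by omega⟩
  have he_inj : e.Injective := fun x y h => Fin.ext (by simpa [e] using h)
  have he : ∀ j, L (e j) = Pi.single j 1 := by
    intro j
    rw [hL2 _ (by simp [e])]
    ext t
    simp [e, Pi.single_apply, Fin.ext_iff]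
  have hi : i₀ ∉ e '' {k}ᶜ := by
    rintro ⟨j, -, h⟩
    simp only [Fin.ext_iff, e, i₀] at h
    omega
  have hT : LinearIndepOn K L (insert i₀ (e '' {k}ᶜ)) := by
    have hcard : (insert i₀ ((Finset.univ.erase k).image e)).card = n + 1 := by
      rw [Finset.card_insert_of_notMem (by simpa using hi),
        Finset.card_image_of_injective _ he_inj]
      simp
    have h : LinearIndepOn K L ↑(insert i₀ ((Finset.univ.erase k).image e)) := hgp _ hcard
    simpa [Set.compl_eq_univ_sdiff] using h
  simpa [hL1 i₀ i.isLt, i₀] using apply_ne_zero_of_linearIndepOn_insert he hi hT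

theorem uniqueness_via_coordinate_hyperplanes_general (m n : ℕ)
    (F G : (Fin m → ℂ) → Fin (n+1) → ℂ)
    (hG : ∀ i, Differentiable ℂ fun z => G z i)
    (a : Fin (n+1) → Fin (n+1) → ℂ) (L : Fin (2*n+2) → Fin (n+1) → ℂ)
    (hL1 : ∀ (i : Fin (2*n+2)) (h : i.val < n+1), L i = a ⟨i.val, h⟩)
    (hL2 : ∀ (i : Fin (2*n+2)), n+1 ≤ i.val →
      L i = fun j => if j.val = i.val - (n+1) then 1 else 0)
    (hgp : ∀ T : Finset (Fin (2*n+2)), T.card = n+1 →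
      LinearIndependent ℂ fun i : T => L i.val)
    (hnd : ∀ (p : MvPolynomial (Fin (n+1)) ℂ) (d : ℕ), d ≤ n+1 → p.IsHomogeneous d →
      (∀ z, MvPolynomial.eval (G z) p = 0) → p = 0)
    (c : Fin (n+1) → ℂ) (hc : ∀ i, c i ≠ 0)
    (hrel : ∀ i : Fin (n+1), ∃ h : (Fin m → ℂ) → ℂ, Differentiable ℂ h ∧
      (∀ z, h z ≠ 0) ∧
      (∀ z, ∑ j, a i j * F z j = h z * ∑ j, a i j * G z j) ∧
      (∀ z, h z * G z i = c i * F z i)) :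
    (∀ i, c i = 1) ∧ ∀ (z : Fin m → ℂ) (i j : Fin (n+1)), F z i * G z j = F z j * G z i := by
  have hGnd : LiesInNoHypersurface G (n + 1) := hnd
  choose h hh_diff hh_ne hℓ hcoord using hrel
  have ha := coeff_ne_zero_of_generalPosition a L hL1 hL2 hgp
  let u : (Fin m → ℂ) → Fin (n + 1) → ℂ := fun z j => (c j)⁻¹ * h j z
  have hu : ∀ j, Differentiable ℂ fun z => u z j := fun j => (hh_diff j).const_mul _
  have hFu : ∀ z j, F z j = u z j * G z j := fun z j => by
    rw [mul_assoc, hcoord, inv_mul_cancel_left₀ (hc j)]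
  have hKu : ∀ z, (relationMatrix a c).map (eval (G z)) *ᵥ u z = 0 := fun z => by
    rw [relationMatrix_map_eval_mulVec a c (G z) (u z)]
    ext i
    have hGu : ∀ j, G z j * u z j = F z j := fun j => by rw [hFu, mul_comm]
    have hhu : h i z = c i * u z i := by simp [u, hc i]
    have hℓu : ∑ j, a i j * (G z j * u z j) = c i * (∑ j, a i j * G z j) * u z i := by
      simp_rw [hGu, hℓ, hhu]
      ring
    simpa [mulVec, dotProduct, sub_eq_zero] using hℓu
  have hc1 : ∀ k, c k = 1 := fun k =>
    hGnd.eq_one_of_relationMatrix_mulVec_eq_zero hG (by simp) (fun i => ha i k) hc hu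
      (z₀ := 0) (fun h0 => hh_ne 0 0 (by simpa [u, hc 0] using congrFun h0 0)) hKu
  obtain rfl : c = 1 := funext hc1
  refine ⟨hc1, fun z i j => ?_⟩
  have hu_eq :=
    hGnd.apply_eq_of_relationMatrix_one_mulVec_eq_zero hG n.le_succ (fun i => ha i 0) hu hKu z
  rw [hFu, hFu, hu_eq i, hu_eq j]
  ring

/-- Fujimoto's proposition: if `g` lies in no hypersurface of degree `≤ n+1`,
`H_{n+2},...,H_{2n+2}` are the coordinate hyperplanes, `{H_j}` are in general position,
and `(f,H_i)/(g,H_i) = c_{i-1} · f_{i-1}/g_{i-1}` (a nowhere-zero holomorphic function)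
for `1 ≤ i ≤ n+1`, then all `c_i = 1` and `f = g`. -/
theorem uniqueness_via_coordinate_hyperplanes (m n : ℕ)
    (F G : (Fin m → ℂ) → Fin (n+1) → ℂ)
    (hF : ∀ i, Differentiable ℂ fun z => F z i) (hG : ∀ i, Differentiable ℂ fun z => G z i)
    (hFred : ∃ z, F z ≠ 0) (hGred : ∃ z, G z ≠ 0)
    (a : Fin (n+1) → Fin (n+1) → ℂ) (L : Fin (2*n+2) → Fin (n+1) → ℂ)
    (hL1 : ∀ (i : Fin (2*n+2)) (h : i.val < n+1), L i = a ⟨i.val, h⟩)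
    (hL2 : ∀ (i : Fin (2*n+2)), n+1 ≤ i.val →
      L i = fun j => if j.val = i.val - (n+1) then 1 else 0)
    (hgp : ∀ T : Finset (Fin (2*n+2)), T.card = n+1 →
      LinearIndependent ℂ fun i : T => L i.val)
    (hnd : ∀ (p : MvPolynomial (Fin (n+1)) ℂ) (d : ℕ), d ≤ n+1 → p.IsHomogeneous d →
      (∀ z, MvPolynomial.eval (G z) p = 0) → p = 0)
    (c : Fin (n+1) → ℂ) (hc : ∀ i, c i ≠ 0)
    (hrel : ∀ i : Fin (n+1), ∃ h : (Fin m → ℂ) → ℂ, Differentiable ℂ h ∧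
      (∀ z, h z ≠ 0) ∧
      (∀ z, ∑ j, a i j * F z j = h z * ∑ j, a i j * G z j) ∧
      (∀ z, h z * G z i = c i * F z i)) :
    (∀ i, c i = 1) ∧ ∀ (z : Fin m → ℂ) (i j : Fin (n+1)), F z i * G z j = F z j * G z i :=
  uniqueness_via_coordinate_hyperplanes_general m n F G hG a L hL1 hL2 hgp hnd c hc hrel
end

section
/- Let f and g be meromorphic maps of C^m into P^n with reduced representations (f_0,...,f_n) and (g_0,...,g_n), and let {H_j}_{j=1}^{2n+2} be hyperplanes in general position in P^n, with defining linear forms L_j, such that h_j := L_j(f_0,...,f_n)/L_j(g_0,...,g_n) is a nowhere-zero holomorphic function on C^m for each j. If g is linearly non-degenerate (its image lies in no hyperplane) and there exist n+2 distinct indices i_1,...,i_{n+2} with [h_{i_1}] = [h_{i_2}] = ... = [h_{i_{n+2}}] in H*/C* (i.e., the quotients h_{i_a}/h_{i_b} are all constants), then f = g as meromorphic maps. -/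
/-!
Among `n + 2` linear forms in general position on `ℂ^(n+1)` there is, up to scaling, exactly one
linear relation `∑ c_j L_j = 0`, and all its coefficients are nonzero. Write `h_j = k_j h_{j₀}` on
`T`. Applying the relation to `F` gives `h_{j₀} ∑ c_j k_j (L_j, G) = 0`, so by the
non-degeneracy of `G` the numbers `c_j k_j` form a second relation; uniqueness forces
`k_j = k_{j₀}`, i.e. `h_j = h_{j₀}` on `T`. Then `F - h_{j₀} G` is annihilated by the `n + 1`
independent forms `L_j`, `j ∈ T \ {j₀}`, hence vanishes, and `F`, `G` are proportional.
-/

open Finset Matrix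

section Relations

variable {K V J : Type*} [Field K] [AddCommGroup V] [Module K V] {L : J → V} {T : Finset J}

theorem eqOn_of_sum_smul_eq [DecidableEq J] {a b : J → K} {j₀ : J} (hj₀ : j₀ ∈ T)
    (hli : LinearIndepOn K L ↑(T.erase j₀))
    (hab : ∑ j ∈ T, a j • L j = ∑ j ∈ T, b j • L j) (h₀ : a j₀ = b j₀) :
    ∀ j ∈ T, a j = b j := by
  have hsum : ∑ j ∈ T.erase j₀, (a j - b j) • L j = 0 := by
    rw [← sub_eq_zero, ← sum_sub_distrib, ← add_sum_erase T _ hj₀] at hab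
    simpa only [← sub_smul, h₀, sub_self, zero_smul, zero_add] using hab
  intro j hj
  rcases eq_or_ne j j₀ with rfl | hne
  · exact h₀
  · exact sub_eq_zero.mp
      (linearIndepOn_finset_iff.mp hli (a - b) hsum j (mem_erase.mpr ⟨hne, hj⟩))

theorem exists_sum_smul_eq_zero_forall_ne_zero [DecidableEq J] [FiniteDimensional K V]
    (hT : Module.finrank K V < T.card) (hgp : ∀ j ∈ T, LinearIndepOn K L ↑(T.erase j)) :
    ∃ c : J → K, ∑ j ∈ T, c j • L j = 0 ∧ ∀ j ∈ T, c j ≠ 0 := by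
  have hdep : ¬LinearIndepOn K L ↑T := fun hli =>
    hT.not_ge (by simpa using hli.fintype_card_le_finrank)
  obtain ⟨c, hc, i, hi, hci⟩ := not_linearIndepOn_finset_iff.mp hdep
  refine ⟨c, hc, fun j hj hcj => hci ?_⟩
  exact eqOn_of_sum_smul_eq (b := 0) hj (hgp j hj) (by simpa using hc) hcj i hi

end Relations

section DotProduct

variable {K ι J : Type*} [Field K] [Fintype ι] {L : J → ι → K}

theorem eq_zero_of_forall_dotProduct_eq_zero {S : Finset J} (hli : LinearIndepOn K L ↑S)
    (hS : S.card = Fintype.card ι) {v : ι → K} (hv : ∀ j ∈ S, L j ⬝ᵥ v = 0) : v = 0 := by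
  have hspan : Submodule.span K (Set.range fun j : S => L j) = ⊤ :=
    LinearIndependent.span_eq_top_of_card_eq_finrank' hli (by simpa using hS)
  refine dotProduct_eq_zero v fun w => ?_
  have := LinearMap.ext_on_range hspan (f := dotProductBilin K K v) (g := 0)
    (fun j => by simpa [dotProduct_comm] using hv j j.2)
  simpa using LinearMap.congr_fun this w

theorem sum_smul_eq_zero_of_linearNondegenerate {M : Type*} {G : M → ι → K}
    (hlnd : ∀ c : ι → K, (∀ z, c ⬝ᵥ G z = 0) → c = 0) {T : Finset J} {a : J → K}
    (ha : ∀ z, ∑ j ∈ T, a j * (L j ⬝ᵥ G z) = 0) : ∑ j ∈ T, a j • L j = 0 :=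
  hlnd _ fun z => by simpa only [sum_dotProduct, smul_dotProduct, smul_eq_mul] using ha z

theorem eq_of_proportional_of_mem [DecidableEq J] {M : Type*} {F G : M → ι → K} {h : J → M → K}
    {T : Finset J} (hT : Fintype.card ι < T.card) (hgp : ∀ j ∈ T, LinearIndepOn K L ↑(T.erase j))
    (hrel : ∀ j ∈ T, ∀ z, L j ⬝ᵥ F z = h j z * L j ⬝ᵥ G z)
    (hlnd : ∀ c : ι → K, (∀ z, c ⬝ᵥ G z = 0) → c = 0)
    {j₀ : J} (hj₀ : j₀ ∈ T) (hne : ∀ z, h j₀ z ≠ 0) {k : J → K}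
    (hk : ∀ j ∈ T, ∀ z, h j z = k j * h j₀ z) :
    ∀ j ∈ T, h j = h j₀ := by
  obtain ⟨c, hc, hc0⟩ := exists_sum_smul_eq_zero_forall_ne_zero (by simpa using hT) hgp
  have hcF : ∀ z, ∑ j ∈ T, c j * (L j ⬝ᵥ F z) = 0 := fun z => by
    simpa only [sum_dotProduct, smul_dotProduct, smul_eq_mul, zero_dotProduct]
      using congrArg (· ⬝ᵥ F z) hc
  have hck : ∑ j ∈ T, (c j * k j) • L j = 0 := by
    refine sum_smul_eq_zero_of_linearNondegenerate hlnd fun z => ?_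
    have : h j₀ z * ∑ j ∈ T, c j * k j * (L j ⬝ᵥ G z) = 0 := by
      rw [← hcF z, mul_sum]
      refine sum_congr rfl fun j hj => ?_
      rw [hrel j hj, hk j hj]
      ring
    exact (mul_eq_zero.mp this).resolve_left (hne z)
  have hkc : ∀ j ∈ T, c j * k j = k j₀ * c j :=
    eqOn_of_sum_smul_eq hj₀ (hgp j₀ hj₀)
      (by rw [hck]; simp only [mul_smul, ← smul_sum, hc, smul_zero]) (mul_comm _ _)
  intro j hj
  have hkj : k j = k j₀ := mul_left_cancel₀ (hc0 j hj) (by rw [hkc j hj, mul_comm])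
  funext z
  rw [hk j hj, hkj, ← hk j₀ hj₀]

end DotProduct

theorem uniqueness_of_n_plus_two_classes_general (m n : ℕ)
    (F G : (Fin m → ℂ) → Fin (n+1) → ℂ)
    (L : Fin (2*n+2) → Fin (n+1) → ℂ)
    (hgp : ∀ T : Finset (Fin (2*n+2)), T.card = n+1 →
      LinearIndependent ℂ fun i : T => L i.val)
    (h : Fin (2*n+2) → (Fin m → ℂ) → ℂ)
    (hne : ∀ j z, h j z ≠ 0)
    (hrel : ∀ j z, ∑ i, L j i * F z i = h j z * ∑ i, L j i * G z i)
    (hlnd : ∀ c : Fin (n+1) → ℂ, (∀ z, ∑ i, c i * G z i = 0) → c = 0)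
    (T : Finset (Fin (2*n+2))) (hT : T.card = n+2)
    (hTeq : ∀ j₁ ∈ T, ∀ j₂ ∈ T, ∃ k : ℂ, ∀ z, h j₁ z = k * h j₂ z) :
    ∀ (z : Fin m → ℂ) (i j : Fin (n+1)), F z i * G z j = F z j * G z i := by
  classical
  have hgpT : ∀ j ∈ T, LinearIndepOn ℂ L ↑(T.erase j) := fun j hj =>
    hgp _ (by rw [card_erase_of_mem hj, hT]; rfl)
  obtain ⟨j₀, hj₀⟩ : T.Nonempty := card_pos.mp (by omega)
  choose! k hk using fun j hj => hTeq j hj j₀ hj₀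
  have hrel' : ∀ j z, L j ⬝ᵥ F z = h j z * L j ⬝ᵥ G z := hrel
  have hhT := eq_of_proportional_of_mem (by simp [hT]) hgpT (fun j _ => hrel' j) hlnd hj₀
    (hne j₀) hk
  intro z i j
  have hFG : F z = h j₀ z • G z := by
    refine sub_eq_zero.mp (eq_zero_of_forall_dotProduct_eq_zero (hgpT j₀ hj₀)
      (by simp [card_erase_of_mem hj₀, hT]) fun j hj => ?_)
    rw [dotProduct_sub, dotProduct_smul, hrel', hhT j (mem_of_mem_erase hj), smul_eq_mul,
      sub_self]
  simp only [hFG, Pi.smul_apply, smul_eq_mul]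
  ring

/-- Fujimoto's uniqueness proposition: if `f, g : ℂ^m → ℙ^n` have reduced
representations `F, G`, the hyperplanes `H₁,...,H_{2n+2}` (with defining linear forms
`L j`) are in general position, each `h j = (f,H_j)/(g,H_j)` is a nowhere-zero
holomorphic function, `g` is linearly non-degenerate, and `n+2` of the classes `[h j]`
in `H*/ℂ*` coincide, then `f = g`. -/
theorem uniqueness_of_n_plus_two_classes (m n : ℕ)
    (F G : (Fin m → ℂ) → Fin (n+1) → ℂ)
    (hF : ∀ i, Differentiable ℂ fun z => F z i) (hG : ∀ i, Differentiable ℂ fun z => G z i)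
    (hFred : ∃ z, F z ≠ 0) (hGred : ∃ z, G z ≠ 0)
    (L : Fin (2*n+2) → Fin (n+1) → ℂ)
    (hgp : ∀ T : Finset (Fin (2*n+2)), T.card = n+1 →
      LinearIndependent ℂ fun i : T => L i.val)
    (h : Fin (2*n+2) → (Fin m → ℂ) → ℂ)
    (hhol : ∀ j, Differentiable ℂ (h j)) (hne : ∀ j z, h j z ≠ 0)
    (hrel : ∀ j z, ∑ i, L j i * F z i = h j z * ∑ i, L j i * G z i)
    (hlnd : ∀ c : Fin (n+1) → ℂ, (∀ z, ∑ i, c i * G z i = 0) → c = 0)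
    (T : Finset (Fin (2*n+2))) (hT : T.card = n+2)
    (hTeq : ∀ j₁ ∈ T, ∀ j₂ ∈ T, ∃ k : ℂ, ∀ z, h j₁ z = k * h j₂ z) :
    ∀ (z : Fin m → ℂ) (i j : Fin (n+1)), F z i * G z j = F z j * G z i :=
  uniqueness_of_n_plus_two_classes_general m n F G L hgp h hne hrel hlnd T hT hTeq
end
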